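/- Let E be a finite set, V a finite index set, and for each v ∈ V let (e_{v,1}, …, e_{v,m_v}) be a finite list of elements of E with m_v ≥ 2. Let C ⊆ ℝ^E be the set of all functions c : E → ℝ such that for every v ∈ V the tuple (c(e_{v,1}), …, c(e_{v,m_v})) satisfies conditions (1) and (2). Then C is a closed subset of ℝ^E; equivalently, the inclusion map of C into ℝ^E is proper. -/

import Mathlib

/-- The matrix `A = [[0, 1], [-1, t]]` associated to an edge with cross ratio `t`. -/
noncomputable def crossA (t : ℝ) : Matrix (Fin 2) (Fin 2) ℝ := !![0, 1; -1, t]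

/-- The partial product `W_j = A_1 A_2 ⋯ A_j` of the matrices associated to the
cross ratios `x_1, …, x_m` (1-indexed: `crossW m x j` is `W_j`). -/
noncomputable def crossW (m : ℕ) (x : Fin m → ℝ) (j : ℕ) : Matrix (Fin 2) (Fin 2) ℝ :=
  ((List.ofFn fun i : Fin m => crossA (x i)).take j).prod

/-- Condition (1): `W_m = -I`. -/
def Cond1 (m : ℕ) (x : Fin m → ℝ) : Prop := crossW m x m = -1

/-- Condition (2) (strict sign condition): `a_1 = 0`, `d_{m-1} = 0`,
`a_j < 0` for `2 ≤ j ≤ m-1`, `d_j > 0` for `1 ≤ j ≤ m-2`, and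
`b_j > 0`, `c_j < 0` for `1 ≤ j ≤ m-1`. -/
def Cond2 (m : ℕ) (x : Fin m → ℝ) : Prop :=
  crossW m x 1 0 0 = 0 ∧ crossW m x (m - 1) 1 1 = 0 ∧
  (∀ j, 2 ≤ j → j ≤ m - 1 → crossW m x j 0 0 < 0) ∧
  (∀ j, 1 ≤ j → j ≤ m - 2 → 0 < crossW m x j 1 1) ∧
  (∀ j, 1 ≤ j → j ≤ m - 1 → 0 < crossW m x j 0 1 ∧ crossW m x j 1 0 < 0)

/-- Condition (3) (weak sign condition): as in (2) but with non-strict inequalities. -/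
def Cond3 (m : ℕ) (x : Fin m → ℝ) : Prop :=
  crossW m x 1 0 0 = 0 ∧ crossW m x (m - 1) 1 1 = 0 ∧
  (∀ j, 2 ≤ j → j ≤ m - 1 → crossW m x j 0 0 ≤ 0) ∧
  (∀ j, 1 ≤ j → j ≤ m - 2 → 0 ≤ crossW m x j 1 1) ∧
  (∀ j, 1 ≤ j → j ≤ m - 1 → 0 ≤ crossW m x j 0 1 ∧ crossW m x j 1 0 ≤ 0)

/-- The cross ratio parameter space: all `c : E → ℝ` such that at each vertex `v`, the
tuple of cross ratios read off along the incident edges `e v 1, …, e v (m v)` satisfies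
conditions (1) and (2). -/
def crossRatioSpace {E V : Type*} (m : V → ℕ) (e : (v : V) → Fin (m v) → E) :
    Set (E → ℝ) :=
  {c | ∀ v : V, Cond1 (m v) (fun i => c (e v i)) ∧ Cond2 (m v) (fun i => c (e v i))}

lemma crossW_succ (m : ℕ) (x : Fin m → ℝ) {j : ℕ} (hj : j < m) :
    crossW m x (j + 1) = crossW m x j * crossA (x ⟨j, hj⟩) := by
  unfold crossW
  rw [List.prod_take_succ _ _ (by simpa using hj)]
  simp

lemma crossW_one (m : ℕ) (x : Fin m → ℝ) (hm : 0 < m) :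
    crossW m x 1 = crossA (x ⟨0, hm⟩) := by
  have := crossW_succ m x hm
  simpa [crossW] using this

lemma det_crossA (t : ℝ) : (crossA t).det = 1 := by
  simp [crossA, Matrix.det_fin_two]

lemma det_crossW (m : ℕ) (x : Fin m → ℝ) (j : ℕ) : (crossW m x j).det = 1 := by
  unfold crossW
  rw [show ∀ l : List (Matrix (Fin 2) (Fin 2) ℝ), l.prod.det = (l.map Matrix.det).prod from fun l => map_list_prod (Matrix.detMonoidHom) l]
  apply List.prod_eq_one
  intro a ha
  simp only [List.mem_map] at ha
  obtain ⟨M, hM, rfl⟩ := ha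
  obtain ⟨i, rfl⟩ := (List.mem_ofFn.1 (List.mem_of_mem_take hM))
  exact det_crossA _

lemma crossA_eq (t : ℝ) : crossA t = t • !![(0:ℝ), 0; 0, 1] + !![0, 1; -1, 0] := by
  ext i j
  fin_cases i <;> fin_cases j <;> simp [crossA]

lemma entry_a (m : ℕ) (x : Fin m → ℝ) {j : ℕ} (hj : j < m) :
    crossW m x (j + 1) 0 0 = -(crossW m x j 0 1) := by
  rw [crossW_succ m x hj]
  simp [Matrix.mul_apply, Fin.sum_univ_two, crossA]

lemma entry_c (m : ℕ) (x : Fin m → ℝ) {j : ℕ} (hj : j < m) :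
    crossW m x (j + 1) 1 0 = -(crossW m x j 1 1) := by
  rw [crossW_succ m x hj]
  simp [Matrix.mul_apply, Fin.sum_univ_two, crossA]

lemma crossW_of_le (m : ℕ) (x : Fin m → ℝ) {j : ℕ} (hj : m ≤ j) :
    crossW m x j = crossW m x m := by
  unfold crossW
  rw [List.take_of_length_le (by simpa using hj), List.take_of_length_le (by simp)]

lemma continuous_crossW (m j : ℕ) : Continuous fun x : Fin m → ℝ => crossW m x j := by
  induction j with
  | zero => simpa [crossW] using continuous_const
  | succ j ih =>
    by_cases hj : j < m
    · have : (fun x : Fin m → ℝ => crossW m x (j + 1)) =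
          fun x => crossW m x j * crossA (x ⟨j, hj⟩) := by
        funext x; exact crossW_succ m x hj
      rw [this]
      refine ih.matrix_mul ?_
      have : (fun x : Fin m → ℝ => crossA (x ⟨j, hj⟩)) =
          fun x => x ⟨j, hj⟩ • !![(0:ℝ), 0; 0, 1] + !![0, 1; -1, 0] := by
        funext x; exact crossA_eq _
      rw [this]
      exact ((continuous_apply _).smul continuous_const).add continuous_const
    · have : (fun x : Fin m → ℝ => crossW m x (j + 1)) = fun x => crossW m x j := by
        funext x
        rw [crossW_of_le m x (j := j + 1) (by omega), crossW_of_le m x (j := j) (by omega)]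
      rw [this]; exact ih

lemma cond2_of_cond3 (m : ℕ) (hm : 2 ≤ m) (x : Fin m → ℝ) (h : Cond3 m x) : Cond2 m x := by
  obtain ⟨h1, h2, hA, hD, hBC⟩ := h
  have h0 : (0 : ℕ) < m := by omega
  have hb1 : crossW m x 1 0 1 = 1 := by rw [crossW_one m x h0]; simp [crossA]
  have hc1 : crossW m x 1 1 0 = -1 := by rw [crossW_one m x h0]; simp [crossA]
  -- key: for 2 ≤ j ≤ m-1, b_j > 0 and d_{j-1} > 0
  have key : ∀ j, 2 ≤ j → j ≤ m - 1 →
      0 < crossW m x j 0 1 ∧ 0 < crossW m x (j - 1) 1 1 := by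
    intro j hj2 hjm
    have hjlt : j - 1 < m := by omega
    have hja : j - 1 + 1 = j := by omega
    have ha : crossW m x j 0 0 = -(crossW m x (j - 1) 0 1) := by
      rw [← hja]; exact entry_a m x hjlt
    have hc : crossW m x j 1 0 = -(crossW m x (j - 1) 1 1) := by
      rw [← hja]; exact entry_c m x hjlt
    have hdet := det_crossW m x j
    rw [Matrix.det_fin_two, ha, hc] at hdet
    have hbprev : 0 ≤ crossW m x (j - 1) 0 1 := (hBC (j - 1) (by omega) (by omega)).1
    have hdj : 0 ≤ crossW m x j 1 1 := by
      by_cases hj' : j ≤ m - 2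
      · exact hD j (by omega) hj'
      · have : j = m - 1 := by omega
        rw [this, h2]
    have hbj : 0 ≤ crossW m x j 0 1 := (hBC j (by omega) hjm).1
    have hdprev : 0 ≤ crossW m x (j - 1) 1 1 := hD (j - 1) (by omega) (by omega)
    constructor
    · nlinarith [mul_nonneg hbprev hdj]
    · nlinarith [mul_nonneg hbprev hdj]
  refine ⟨h1, h2, ?_, ?_, ?_⟩
  · intro j hj2 hjm
    have hjlt : j - 1 < m := by omega
    have hja : j - 1 + 1 = j := by omega
    have ha : crossW m x j 0 0 = -(crossW m x (j - 1) 0 1) := by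
      rw [← hja]; exact entry_a m x hjlt
    rw [ha, neg_lt, neg_zero]
    rcases Nat.lt_or_ge j 3 with h3 | h3
    · have : j = 2 := by omega
      subst this; simpa using hb1.symm ▸ (by norm_num : (0:ℝ) < 1)
    · exact (key (j - 1) (by omega) (by omega)).1
  · intro j hj1 hjm
    have := (key (j + 1) (by omega) (by omega)).2
    simpa using this
  · intro j hj1 hjm
    constructor
    · rcases Nat.lt_or_ge j 2 with h2' | h2'
      · have : j = 1 := by omega
        rw [this, hb1]; norm_num
      · exact (key j h2' hjm).1
    · rcases Nat.lt_or_ge j 2 with h2' | h2'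
      · have : j = 1 := by omega
        rw [this, hc1]; norm_num
      · have hjlt : j - 1 < m := by omega
        have hja : j - 1 + 1 = j := by omega
        have hc : crossW m x j 1 0 = -(crossW m x (j - 1) 1 1) := by
          rw [← hja]; exact entry_c m x hjlt
        rw [hc, neg_lt, neg_zero] at *
        exact (key j h2' hjm).2

lemma cond3_of_cond2 (m : ℕ) (x : Fin m → ℝ) (h : Cond2 m x) : Cond3 m x := by
  obtain ⟨h1, h2, hA, hD, hBC⟩ := h
  exact ⟨h1, h2, fun j a b => le_of_lt (hA j a b), fun j a b => le_of_lt (hD j a b),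
    fun j a b => ⟨le_of_lt (hBC j a b).1, le_of_lt (hBC j a b).2⟩⟩

lemma isClosed_guard {α : Type*} [TopologicalSpace α] {p q : Prop} {s : Set α}
    (hs : IsClosed s) : IsClosed {x | p → q → x ∈ s} := by
  by_cases hp : p
  · by_cases hq : q
    · convert hs using 1; ext x; simp [hp, hq]
    · convert isClosed_univ using 1; ext x; simp [hq]
  · convert isClosed_univ using 1; ext x; simp [hp]

lemma isClosed_cond13 (m : ℕ) : IsClosed {x : Fin m → ℝ | Cond1 m x ∧ Cond3 m x} := by
  have hc : ∀ j (i k : Fin 2), Continuous fun x : Fin m → ℝ => crossW m x j i k :=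
    fun j i k => (continuous_crossW m j).matrix_elem i k
  have hset : {x : Fin m → ℝ | Cond1 m x ∧ Cond3 m x} =
      {x : Fin m → ℝ | crossW m x m = -1} ∩
      ({x | crossW m x 1 0 0 = 0} ∩
      ({x | crossW m x (m - 1) 1 1 = 0} ∩
      ((⋂ j, {x | 2 ≤ j → j ≤ m - 1 → x ∈ {y : Fin m → ℝ | crossW m y j 0 0 ≤ 0}}) ∩
      ((⋂ j, {x | 1 ≤ j → j ≤ m - 2 → x ∈ {y : Fin m → ℝ | 0 ≤ crossW m y j 1 1}}) ∩
      (⋂ j, {x | 1 ≤ j → j ≤ m - 1 → x ∈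
        {y : Fin m → ℝ | 0 ≤ crossW m y j 0 1} ∩ {y | crossW m y j 1 0 ≤ 0}}))))) := by
    ext x
    simp only [Cond1, Cond3, Set.mem_setOf_eq, Set.mem_inter_iff, Set.mem_iInter]
  rw [hset]
  refine (isClosed_eq (continuous_crossW m m) continuous_const).inter ?_
  refine (isClosed_eq (hc 1 0 0) continuous_const).inter ?_
  refine (isClosed_eq (hc (m - 1) 1 1) continuous_const).inter ?_
  refine (isClosed_iInter fun j => isClosed_guard
    (isClosed_le (hc j 0 0) continuous_const)).inter ?_
  refine (isClosed_iInter fun j => isClosed_guard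
    (isClosed_le continuous_const (hc j 1 1))).inter ?_
  exact isClosed_iInter fun j => isClosed_guard
    ((isClosed_le continuous_const (hc j 0 1)).inter
      (isClosed_le (hc j 1 0) continuous_const))

lemma isClosed_cond (m : ℕ) (hm : 2 ≤ m) :
    IsClosed {x : Fin m → ℝ | Cond1 m x ∧ Cond2 m x} := by
  have heq : {x : Fin m → ℝ | Cond1 m x ∧ Cond2 m x} =
      {x : Fin m → ℝ | Cond1 m x ∧ Cond3 m x} := by
    ext x
    exact ⟨fun ⟨a, b⟩ => ⟨a, cond3_of_cond2 m x b⟩,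
      fun ⟨a, b⟩ => ⟨a, cond2_of_cond3 m hm x b⟩⟩
  rw [heq]
  exact isClosed_cond13 m

/-- Lemma 3.2: the cross ratio parameter space is a closed subset of `ℝ^E`; equivalently,
its inclusion into `ℝ^E` is a proper map. -/
theorem crossRatioSpace_isClosed_and_inclusion_isProperMap
    {E V : Type*} [Fintype E] [Fintype V]
    (m : V → ℕ) (hm : ∀ v, 2 ≤ m v) (e : (v : V) → Fin (m v) → E) :
    IsClosed (crossRatioSpace m e) ∧
    IsProperMap (fun c : crossRatioSpace m e => (c : E → ℝ)) := by
  have hclosed : IsClosed (crossRatioSpace m e) := by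
    have heq : crossRatioSpace m e = ⋂ v, (fun c : E → ℝ => fun i => c (e v i)) ⁻¹'
        {x : Fin (m v) → ℝ | Cond1 (m v) x ∧ Cond2 (m v) x} := by
      ext c
      simp [crossRatioSpace, Set.mem_iInter]
    rw [heq]
    exact isClosed_iInter fun v => (isClosed_cond (m v) (hm v)).preimage
      (continuous_pi fun i => continuous_apply _)
  exact ⟨hclosed, hclosed.isProperMap_subtypeVal⟩
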